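/- Let G be a strongly connected simple digraph on n vertices and 1/2 < α < 1. Then μ_α(G) = max_i (α D_i + (1-α) T_i / D_i) (equivalently, equality holds in the upper bound of the row-sum estimate) if and only if G is distance regular, i.e., all vertex transmissions are equal. -/

import Mathlib

open Matrix BigOperators

/-- Spectral radius of a real square matrix: the largest modulus of its complex eigenvalues. -/
noncomputable def specRad {n : ℕ} (M : Matrix (Fin n) (Fin n) ℝ) : ℝ :=
  sSup {r : ℝ | ∃ μ ∈ spectrum ℂ (M.map (fun x => (x : ℂ))), r = ‖μ‖}

/-- A matrix is irreducible iff its associated digraph is strongly connected. -/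
def Irred {n : ℕ} (M : Matrix (Fin n) (Fin n) ℝ) : Prop :=
  ∀ i j : Fin n, Relation.ReflTransGen (fun a b => M a b ≠ 0) i j

/-- A directed walk of length `k` from `i` to `j` in a digraph. -/
def DWalk {n : ℕ} (G : Digraph (Fin n)) (i j : Fin n) (k : ℕ) : Prop :=
  ∃ f : ℕ → Fin n, f 0 = i ∧ f k = j ∧ ∀ l < k, G.Adj (f l) (f (l + 1))

/-- A digraph is strongly connected iff every vertex can reach every vertex. -/
def SConn {n : ℕ} (G : Digraph (Fin n)) : Prop :=
  ∀ i j : Fin n, ∃ k : ℕ, DWalk G i j k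

/-- A simple digraph has no loops. -/
def Loopless {n : ℕ} (G : Digraph (Fin n)) : Prop := ∀ i : Fin n, ¬ G.Adj i i

/-- Directed distance from `i` to `j`. -/
noncomputable def ddist {n : ℕ} (G : Digraph (Fin n)) (i j : Fin n) : ℕ :=
  sInf {k : ℕ | DWalk G i j k}

/-- Transmission of vertex `i`: sum of distances from `i` to all vertices. -/
noncomputable def transm {n : ℕ} (G : Digraph (Fin n)) (i : Fin n) : ℝ :=
  ∑ j : Fin n, (ddist G i j : ℝ)

/-- The generalized distance matrix `D_α(G) = α·Diag(Tr) + (1-α)·D(G)`. -/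
noncomputable def Dalpha {n : ℕ} (α : ℝ) (G : Digraph (Fin n)) : Matrix (Fin n) (Fin n) ℝ :=
  α • Matrix.diagonal (transm G) + (1 - α) • (Matrix.of fun i j => (ddist G i j : ℝ))

/-- The `D_α` spectral radius of a digraph. -/
noncomputable def mualpha {n : ℕ} (α : ℝ) (G : Digraph (Fin n)) : ℝ :=
  specRad (Dalpha α G)

/-- Isomorphism of digraphs on `Fin n`. -/
def IsoD {n : ℕ} (G H : Digraph (Fin n)) : Prop :=
  ∃ e : Fin n ≃ Fin n, ∀ i j : Fin n, G.Adj i j ↔ H.Adj (e i) (e j)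

/-- The digraph `K(n,k,m)`: vertices `0..k-1` form `K↔ₖ`, `k..k+m-1` form `K↔ₘ`,
`k+m..n-1` form `K↔_{n-k-m}`; all arcs present except those from `K↔_{n-k-m}` to `K↔ₘ`. -/
def KD (n k m : ℕ) : Digraph (Fin n) :=
  ⟨fun i j => i ≠ j ∧ ¬(k + m ≤ (i : ℕ) ∧ k ≤ (j : ℕ) ∧ (j : ℕ) < k + m)⟩

/-- A directed walk staying inside a vertex set `A`. -/
def DWalkIn {n : ℕ} (G : Digraph (Fin n)) (A : Set (Fin n)) (i j : Fin n) (k : ℕ) : Prop :=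
  ∃ f : ℕ → Fin n, f 0 = i ∧ f k = j ∧ (∀ l ≤ k, f l ∈ A) ∧ ∀ l < k, G.Adj (f l) (f (l + 1))

/-- The induced subdigraph on `A` is strongly connected. -/
def SCOn {n : ℕ} (G : Digraph (Fin n)) (A : Set (Fin n)) : Prop :=
  ∀ i ∈ A, ∀ j ∈ A, ∃ k : ℕ, DWalkIn G A i j k

/-!
Write `b_i` for the row bound `α D_i + (1 - α) T_i / D_i`. The positive vector `D = (D_i)`
satisfies `D_α D = (b_i D_i)_i`, so a Collatz–Wielandt estimate applied to the moduli of an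
eigenvector gives `|μ| ≤ max b_i` for every eigenvalue `μ`. If `μ_α = max b_i`, look at an
index where `|v_i| / D_i` is maximal: all estimates there are tight, and since every
off-diagonal entry of `D_α` is positive, `|v|` is a multiple of `D`, which makes `D` an
eigenvector for `max b_i`; so all `b_i` coincide. For the rows `p`, `q` of largest and smallest
transmission, `b_p - b_q ≥ (2α - 1)(D_p - D_q)`, and `α > 1/2` forces `D_p = D_q`.
Conversely, if all `D_i = r` then `D` is an eigenvector with eigenvalue `r = b_i`.
-/

open Finset

section PerronFrobenius

variable {ι : Type*} [Fintype ι] {M : Matrix ι ι ℝ} {x w : ι → ℝ} {c r : ℝ}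

lemma exists_le_smul_eq (hx : ∀ i, 0 < x i) (hw : 0 ≤ w) (hw0 : w ≠ 0) :
    ∃ i₀, ∃ k > 0, w ≤ k • x ∧ w i₀ = k * x i₀ := by
  obtain ⟨j, hj⟩ := Function.ne_iff.mp hw0
  have : Nonempty ι := ⟨j⟩
  obtain ⟨i₀, hi₀⟩ := Finite.exists_max fun i => w i / x i
  refine ⟨i₀, w i₀ / x i₀, ?_, fun i => ?_, (div_mul_cancel₀ _ (hx i₀).ne').symm⟩
  · exact lt_of_lt_of_le (div_pos (lt_of_le_of_ne (hw j) (Ne.symm hj)) (hx j)) (hi₀ j)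
  · simpa [div_le_iff₀ (hx i)] using hi₀ i

lemma mulVec_le_mul_mulVec_of_le_smul (hM : ∀ i j, 0 ≤ M i j) {k : ℝ} (hwk : w ≤ k • x) (i : ι) :
    (M *ᵥ w) i ≤ k * (M *ᵥ x) i := by
  simp only [Matrix.mulVec, dotProduct, mul_sum]
  refine sum_le_sum fun j _ => ?_
  calc M i j * w j ≤ M i j * (k * x j) := mul_le_mul_of_nonneg_left (hwk j) (hM i j)
    _ = k * (M i j * x j) := by ring

theorem le_of_smul_le_mulVec (hM : ∀ i j, 0 ≤ M i j) (hx : ∀ i, 0 < x i)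
    (hMx : M *ᵥ x ≤ c • x) (hw : 0 ≤ w) (hw0 : w ≠ 0) (hrw : r • w ≤ M *ᵥ w) : r ≤ c := by
  obtain ⟨i₀, k, hk, hwk, hwi₀⟩ := exists_le_smul_eq hx hw hw0
  have hpos : 0 < k * x i₀ := mul_pos hk (hx i₀)
  have := calc r * (k * x i₀) = r * w i₀ := by rw [hwi₀]
    _ ≤ (M *ᵥ w) i₀ := hrw i₀
    _ ≤ k * (M *ᵥ x) i₀ := mulVec_le_mul_mulVec_of_le_smul hM hwk i₀
    _ ≤ k * (c * x i₀) := mul_le_mul_of_nonneg_left (hMx i₀) hk.le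
    _ = c * (k * x i₀) := by ring
  exact le_of_mul_le_mul_right this hpos

theorem mulVec_eq_smul_of_smul_le_mulVec (hM : ∀ i j, 0 ≤ M i j)
    (hoff : ∀ i j, i ≠ j → 0 < M i j) (hx : ∀ i, 0 < x i) (hMx : M *ᵥ x ≤ c • x)
    (hw : 0 ≤ w) (hw0 : w ≠ 0) (hcw : c • w ≤ M *ᵥ w) : M *ᵥ x = c • x := by
  obtain ⟨i₀, k, hk, hwk, hwi₀⟩ := exists_le_smul_eq hx hw hw0
  have hgap : (M *ᵥ (k • x - w)) i₀ = 0 := by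
    have h₁ := hcw i₀
    have h₂ := hMx i₀
    have h₃ := mulVec_le_mul_mulVec_of_le_smul hM hwk i₀
    simp only [Pi.smul_apply, smul_eq_mul, hwi₀] at h₁ h₂
    rw [Matrix.mulVec_sub, Matrix.mulVec_smul, Pi.sub_apply, Pi.smul_apply, smul_eq_mul]
    nlinarith
  have hw_eq : w = k • x := by
    funext j
    by_cases hj : j = i₀
    · subst hj; exact hwi₀
    have hterm := (sum_eq_zero_iff_of_nonneg fun t _ => mul_nonneg (hM i₀ t)
      (sub_nonneg.mpr (hwk t))).mp hgap j (mem_univ j)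
    simp only [Pi.smul_apply, smul_eq_mul] at hterm ⊢
    rcases mul_eq_zero.mp hterm with h | h
    · exact absurd h (hoff i₀ j (Ne.symm hj)).ne'
    · linarith
  refine le_antisymm hMx fun i => ?_
  have := hcw i
  rw [hw_eq, Matrix.mulVec_smul] at this
  simp only [Pi.smul_apply, smul_eq_mul] at this ⊢
  nlinarith

lemma smul_norm_le_mulVec_norm (hM : ∀ i j, 0 ≤ M i j) {μ : ℂ} {v : ι → ℂ}
    (hv : M.map (fun a => (a : ℂ)) *ᵥ v = μ • v) :
    ‖μ‖ • (fun i => ‖v i‖) ≤ M *ᵥ fun i => ‖v i‖ := fun i => by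
  calc ‖μ‖ * ‖v i‖ = ‖∑ j, (M i j : ℂ) * v j‖ := by
        rw [← norm_mul, ← smul_eq_mul, ← Pi.smul_apply μ v i, ← hv]; rfl
    _ ≤ ∑ j, M i j * ‖v j‖ := by
        refine (norm_sum_le _ _).trans_eq (sum_congr rfl fun j _ => ?_)
        rw [norm_mul, Complex.norm_real, Real.norm_of_nonneg (hM i j)]

end PerronFrobenius

section Spectrum

variable {ι : Type*} [Fintype ι] [DecidableEq ι]

lemma Matrix.mem_spectrum_iff_exists_mulVec_eq_smul {K : Type*} [Field K] (A : Matrix ι ι K)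
    (μ : K) : μ ∈ spectrum K A ↔ ∃ v ≠ 0, A *ᵥ v = μ • v := by
  rw [← Matrix.spectrum_toLin', ← Module.End.hasEigenvalue_iff_mem_spectrum,
    Module.End.hasEigenvalue_iff, Submodule.ne_bot_iff]
  simp only [Module.End.mem_eigenspace_iff, Matrix.toLin'_apply]
  exact exists_congr fun _ => and_comm

lemma Matrix.spectrum_nonempty [Nonempty ι] (A : Matrix ι ι ℂ) : (spectrum ℂ A).Nonempty := by
  obtain ⟨μ, hμ⟩ := Module.End.exists_eigenvalue (Matrix.toLin' A)
  exact ⟨μ, Matrix.spectrum_toLin' A ▸ Module.End.hasEigenvalue_iff_mem_spectrum.mp hμ⟩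

variable {M : Matrix ι ι ℝ} {x : ι → ℝ} {c : ℝ} {μ : ℂ}

theorem norm_le_of_mulVec_le_smul (hM : ∀ i j, 0 ≤ M i j) (hx : ∀ i, 0 < x i)
    (hMx : M *ᵥ x ≤ c • x) (hμ : μ ∈ spectrum ℂ (M.map (fun a => (a : ℂ)))) : ‖μ‖ ≤ c := by
  obtain ⟨v, hv0, hv⟩ := (Matrix.mem_spectrum_iff_exists_mulVec_eq_smul _ μ).mp hμ
  refine le_of_smul_le_mulVec hM hx hMx (fun i => norm_nonneg (v i)) ?_
    (smul_norm_le_mulVec_norm hM hv)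
  exact fun h => hv0 (funext fun i => norm_eq_zero.mp (congrFun h i))

theorem mulVec_eq_smul_of_norm_eq (hM : ∀ i j, 0 ≤ M i j) (hoff : ∀ i j, i ≠ j → 0 < M i j)
    (hx : ∀ i, 0 < x i) (hMx : M *ᵥ x ≤ c • x)
    (hμ : μ ∈ spectrum ℂ (M.map (fun a => (a : ℂ)))) (hμc : ‖μ‖ = c) : M *ᵥ x = c • x := by
  obtain ⟨v, hv0, hv⟩ := (Matrix.mem_spectrum_iff_exists_mulVec_eq_smul _ μ).mp hμ
  refine mulVec_eq_smul_of_smul_le_mulVec hM hoff hx hMx (fun i => norm_nonneg (v i)) ?_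
    (hμc ▸ smul_norm_le_mulVec_norm hM hv)
  exact fun h => hv0 (funext fun i => norm_eq_zero.mp (congrFun h i))

theorem ofReal_mem_spectrum_of_mulVec_eq_smul (hx0 : x ≠ 0) (hMx : M *ᵥ x = c • x) :
    (c : ℂ) ∈ spectrum ℂ (M.map (fun a => (a : ℂ))) := by
  refine (Matrix.mem_spectrum_iff_exists_mulVec_eq_smul _ _).mpr
    ⟨fun i => (x i : ℂ), fun h => hx0 (funext fun i => Complex.ofReal_eq_zero.mp (congrFun h i)), ?_⟩
  funext i
  have := RingHom.map_mulVec Complex.ofRealHom M x i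
  rw [hMx, Pi.smul_apply, smul_eq_mul, map_mul] at this
  exact this.symm

end Spectrum

section SpectralRadius

variable {n : ℕ} (M : Matrix (Fin n) (Fin n) ℝ)

lemma exists_norm_eq_specRad (hn : 0 < n) :
    ∃ μ ∈ spectrum ℂ (M.map (fun a => (a : ℂ))), ‖μ‖ = specRad M := by
  have : Nonempty (Fin n) := ⟨⟨0, hn⟩⟩
  have hne : {r : ℝ | ∃ μ ∈ spectrum ℂ (M.map (fun a => (a : ℂ))), r = ‖μ‖}.Nonempty :=
    let ⟨μ, hμ⟩ := Matrix.spectrum_nonempty (M.map (fun a => (a : ℂ)))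
    ⟨‖μ‖, μ, hμ, rfl⟩
  have hfin : {r : ℝ | ∃ μ ∈ spectrum ℂ (M.map (fun a => (a : ℂ))), r = ‖μ‖}.Finite := by
    simpa only [eq_comm, Set.image] using (Matrix.finite_spectrum _).image (‖·‖)
  obtain ⟨μ, hμ, hr⟩ := hne.csSup_mem hfin
  exact ⟨μ, hμ, hr.symm⟩

lemma specRad_eq_of_mem_spectrum {r : ℝ} (hr : 0 ≤ r)
    (hmem : (r : ℂ) ∈ spectrum ℂ (M.map (fun a => (a : ℂ))))
    (hle : ∀ μ ∈ spectrum ℂ (M.map (fun a => (a : ℂ))), ‖μ‖ ≤ r) : specRad M = r := by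
  refine IsGreatest.csSup_eq ⟨⟨r, hmem, ?_⟩, ?_⟩
  · rw [Complex.norm_real, Real.norm_of_nonneg hr]
  · rintro _ ⟨μ, hμ, rfl⟩
    exact hle μ hμ

end SpectralRadius

section Digraph

variable {n : ℕ} {G : Digraph (Fin n)} {α : ℝ}

lemma one_le_ddist (hsc : SConn G) {i j : Fin n} (h : i ≠ j) : 1 ≤ ddist G i j := by
  obtain ⟨k, hk⟩ := hsc i j
  refine Nat.one_le_iff_ne_zero.mpr fun h0 => h ?_
  have hwalk : DWalk G i j (ddist G i j) := Nat.sInf_mem (s := {k | DWalk G i j k}) ⟨k, hk⟩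
  obtain ⟨f, hf0, hfk, -⟩ := h0 ▸ hwalk
  exact hf0.symm.trans hfk

lemma transm_nonneg (i : Fin n) : 0 ≤ transm G i :=
  sum_nonneg fun _ _ => Nat.cast_nonneg _

lemma transm_pos (hn : 2 ≤ n) (hsc : SConn G) (i : Fin n) : 0 < transm G i := by
  obtain ⟨j, hj⟩ := Fintype.exists_ne_of_one_lt_card (by simp; omega) i
  calc (0 : ℝ) < ddist G i j := by exact_mod_cast one_le_ddist hsc (Ne.symm hj)
    _ ≤ transm G i := single_le_sum (fun t _ => Nat.cast_nonneg (ddist G i t)) (mem_univ j)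

lemma Dalpha_apply (i j : Fin n) : Dalpha α G i j =
    α * (if i = j then transm G i else 0) + (1 - α) * ddist G i j := by
  simp [Dalpha, Matrix.diagonal_apply]

lemma Dalpha_nonneg (h0 : 0 ≤ α) (h1 : α ≤ 1) (i j : Fin n) : 0 ≤ Dalpha α G i j := by
  rw [Dalpha_apply]
  have := transm_nonneg (G := G) i
  have : 0 ≤ 1 - α := by linarith
  split_ifs <;> positivity

lemma Dalpha_pos_of_ne (hsc : SConn G) (h1 : α < 1) {i j : Fin n} (h : i ≠ j) :
    0 < Dalpha α G i j := by
  have : (1 : ℝ) ≤ ddist G i j := by exact_mod_cast one_le_ddist hsc h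
  rw [Dalpha_apply, if_neg h]
  nlinarith

/-- The paper's row bound `α D_i + (1 - α) T_i / D_i`, with `T_i = ∑ₜ d_{it} D_t`. -/
noncomputable def rowBound (α : ℝ) (G : Digraph (Fin n)) (i : Fin n) : ℝ :=
  α * transm G i + (1 - α) * (∑ t, (ddist G i t : ℝ) * transm G t) / transm G i

lemma Dalpha_mulVec_transm {i : Fin n} (hT : 0 < transm G i) :
    (Dalpha α G *ᵥ transm G) i = rowBound α G i * transm G i := by
  simp only [Dalpha, Matrix.add_mulVec, Matrix.smul_mulVec, Matrix.mulVec_diagonal, Pi.add_apply,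
    Pi.smul_apply, smul_eq_mul, rowBound]
  simp only [Matrix.mulVec, dotProduct, Matrix.of_apply]
  field_simp

lemma Dalpha_mulVec_transm_eq_smul_iff (hT : ∀ i, 0 < transm G i) {c : ℝ} :
    Dalpha α G *ᵥ transm G = c • transm G ↔ ∀ i, rowBound α G i = c := by
  simp only [funext_iff, Dalpha_mulVec_transm (hT _), Pi.smul_apply, smul_eq_mul]
  exact forall_congr' fun i => mul_left_inj' (hT i).ne'

lemma Dalpha_mulVec_transm_le_iSup (hT : ∀ i, 0 < transm G i) :
    Dalpha α G *ᵥ transm G ≤ (⨆ j, rowBound α G j) • transm G := fun i => by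
  rw [Dalpha_mulVec_transm (hT i), Pi.smul_apply, smul_eq_mul]
  exact mul_le_mul_of_nonneg_right (le_ciSup (Set.finite_range _).bddAbove i) (hT i).le

lemma rowBound_of_transm_eq {r : ℝ} (hr : 0 < r) (hreg : ∀ t, transm G t = r) (i : Fin n) :
    rowBound α G i = r := by
  have hsum : ∑ t, (ddist G i t : ℝ) * transm G t = r * r := by
    simp only [hreg, ← sum_mul]
    rw [← transm, hreg]
  rw [rowBound, hsum, hreg]
  field_simp
  ring

lemma add_le_rowBound (h1 : α ≤ 1) {i : Fin n} (hT : 0 < transm G i) {m : ℝ}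
    (hm : ∀ t, m ≤ transm G t) : α * transm G i + (1 - α) * m ≤ rowBound α G i := by
  have : m * transm G i ≤ ∑ t, (ddist G i t : ℝ) * transm G t := by
    rw [transm, mul_sum]
    exact sum_le_sum fun t _ => by rw [mul_comm]; gcongr; exact hm t
  have hα : 0 ≤ 1 - α := by linarith
  rw [rowBound, mul_div_assoc]
  linarith [mul_le_mul_of_nonneg_left ((le_div_iff₀ hT).mpr this) hα]

lemma rowBound_le_add (h1 : α ≤ 1) {i : Fin n} (hT : 0 < transm G i) {m : ℝ}
    (hm : ∀ t, transm G t ≤ m) : rowBound α G i ≤ α * transm G i + (1 - α) * m := by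
  have : ∑ t, (ddist G i t : ℝ) * transm G t ≤ m * transm G i := by
    rw [transm, mul_sum]
    exact sum_le_sum fun t _ => by rw [mul_comm m]; gcongr; exact hm t
  have hα : 0 ≤ 1 - α := by linarith
  rw [rowBound, mul_div_assoc]
  linarith [mul_le_mul_of_nonneg_left ((div_le_iff₀ hT).mpr this) hα]

theorem transm_eq_of_rowBound_eq (h0 : 1 / 2 < α) (h1 : α < 1) (hT : ∀ i, 0 < transm G i)
    (hs : ∀ i j, rowBound α G i = rowBound α G j) (i j : Fin n) : transm G i = transm G j := by
  have : Nonempty (Fin n) := ⟨i⟩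
  obtain ⟨p, hp⟩ := Finite.exists_max (transm G)
  obtain ⟨q, hq⟩ := Finite.exists_min (transm G)
  have hlow := add_le_rowBound h1.le (hT p) hq
  have hupp := rowBound_le_add h1.le (hT q) hp
  have hpq : transm G p ≤ transm G q := by
    rw [hs p q] at hlow
    nlinarith [hq p]
  linarith [hp i, hq i, hp j, hq j]

end Digraph

theorem stmt4_general {n : ℕ} (hn : 2 ≤ n) (G : Digraph (Fin n)) (hsc : SConn G)
    (α : ℝ) (h0 : 1 / 2 < α) (h1 : α < 1) :
    mualpha α G = (⨆ i : Fin n, (α * transm G i +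
        (1 - α) * (∑ t : Fin n, (ddist G i t : ℝ) * transm G t) / transm G i)) ↔
      ∀ i j : Fin n, transm G i = transm G j := by
  change specRad (Dalpha α G) = ⨆ i, rowBound α G i ↔ _
  have hT := transm_pos hn hsc
  have hM := Dalpha_nonneg (G := G) (by linarith) h1.le
  have hMT := Dalpha_mulVec_transm_le_iSup (α := α) hT
  constructor
  · intro hρ
    obtain ⟨μ, hμ, hμρ⟩ := exists_norm_eq_specRad (Dalpha α G) (by omega)
    have hconst := (Dalpha_mulVec_transm_eq_smul_iff hT).mp <| mulVec_eq_smul_of_norm_eq hM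
      (fun i j => Dalpha_pos_of_ne hsc h1) hT hMT hμ (hμρ.trans hρ)
    exact transm_eq_of_rowBound_eq h0 h1 hT fun i j => (hconst i).trans (hconst j).symm
  · intro hreg
    have i₀ : Fin n := ⟨0, by omega⟩
    have : Nonempty (Fin n) := ⟨i₀⟩
    have hs := rowBound_of_transm_eq (α := α) (hT i₀) fun t => hreg t i₀
    have hc : (⨆ i, rowBound α G i) = transm G i₀ := by simp only [hs, ciSup_const]
    rw [hc] at hMT ⊢
    have hEig := (Dalpha_mulVec_transm_eq_smul_iff hT).mpr hs
    exact specRad_eq_of_mem_spectrum _ (hT i₀).le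
      (ofReal_mem_spectrum_of_mulVec_eq_smul (fun h => (hT i₀).ne' (congrFun h i₀)) hEig)
      fun μ hμ => norm_le_of_mulVec_le_smul hM hT hMT hμ

theorem stmt4 {n : ℕ} (hn : 2 ≤ n) (G : Digraph (Fin n)) (hG : Loopless G) (hsc : SConn G)
    (α : ℝ) (h0 : 1 / 2 < α) (h1 : α < 1) :
    mualpha α G = (⨆ i : Fin n, (α * transm G i +
        (1 - α) * (∑ t : Fin n, (ddist G i t : ℝ) * transm G t) / transm G i)) ↔
      ∀ i j : Fin n, transm G i = transm G j :=
  stmt4_general hn G hsc α h0 h1
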